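/- Let L be the generator of a trace-preserving quantum dynamical semigroup on 𝔗(H) in generalized standard form, with operators M (closed, densely defined, generating a contraction semigroup on H) and (L_k) on D(M) satisfying L(ρ) = Σ_k L_k ρ L_k† − Mρ − ρM† for all ρ in the core D_0 := {Σ_{n=1}^N |φ_n⟩⟨ψ_n| : φ_n, ψ_n ∈ D(M), N < ∞}, and Σ_k ‖L_kφ‖² = 2Re⟨φ, Mφ⟩ for φ ∈ D(M). Then there exists an orthonormal basis {e_k} of H such that D_e (the finite span of {e_k}) is a core for M and D_e² (the span of the matrix units |e_k⟩⟨e_ℓ|) is a core for L. -/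

import Mathlib

open Filter Set
open scoped InnerProductSpace ComplexConjugate ComplexOrder Topology ComplexInnerProductSpace

noncomputable section

variable {H T : Type*}

/-- An abstract model of the Banach space `𝔗(H)` of trace-class operators on the Hilbert
space `H`, equipped with the trace norm `‖·‖₁`: a Banach space `T` acting injectively as
bounded operators on `H`, containing all rank-one operators `|x⟩⟨y|` (with
`‖ |x⟩⟨y| ‖₁ = ‖x‖·‖y‖`, their span being dense), together with the trace functional. -/
structure TraceClassModel (H T : Type*) [NormedAddCommGroup H] [InnerProductSpace ℂ H]
    [NormedAddCommGroup T] [NormedSpace ℂ T] where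
  /-- a trace-class operator acts as a bounded operator on `H` -/
  toCLM : T →ₗ[ℂ] (H →L[ℂ] H)
  toCLM_injective : Function.Injective toCLM
  /-- the rank-one operator `|x⟩⟨y| : z ↦ ⟪y, z⟫ • x` as a trace-class operator -/
  rankOne : H → H → T
  toCLM_rankOne : ∀ x y z : H, toCLM (rankOne x y) z = ⟪y, z⟫_ℂ • x
  norm_rankOne : ∀ x y : H, ‖rankOne x y‖ = ‖x‖ * ‖y‖
  dense_span_rankOne :
    Dense ((Submodule.span ℂ (Set.range fun p : H × H => rankOne p.1 p.2) : Submodule ℂ T) : Set T)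
  /-- the trace, a continuous linear functional for the trace norm -/
  trace : T →L[ℂ] ℂ
  trace_rankOne : ∀ x y : H, trace (rankOne x y) = ⟪y, x⟫_ℂ

variable [NormedAddCommGroup H] [InnerProductSpace ℂ H] [CompleteSpace H]
  [NormedAddCommGroup T] [NormedSpace ℂ T] [CompleteSpace T]

/-- The standard criterion for complete positivity of a map on trace-class operators:
`∑_{k,ℓ} ⟪ψ_k, P(|φ_k⟩⟨φ_ℓ|) ψ_ℓ⟫ ≥ 0` for all finite families of vectors. -/
def TraceClassModel.IsCPMap (Mod : TraceClassModel H T) (P : T → T) : Prop :=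
  ∀ (N : ℕ) (φ ψ : Fin N → H),
    0 ≤ ∑ k, ∑ l, ⟪ψ k, Mod.toCLM (P (Mod.rankOne (φ k) (φ l))) (ψ l)⟫_ℂ

/-- A quantum dynamical semigroup: a strongly continuous semigroup of trace-preserving
completely positive linear maps on the trace class. -/
structure QDS {H T : Type*} [NormedAddCommGroup H] [InnerProductSpace ℂ H]
    [NormedAddCommGroup T] [NormedSpace ℂ T] (Mod : TraceClassModel H T) where
  map : ℝ → T →L[ℂ] T
  map_zero : map 0 = ContinuousLinearMap.id ℂ T
  map_add : ∀ s t : ℝ, 0 ≤ s → 0 ≤ t → map (s + t) = (map s).comp (map t)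
  strong_continuity : ∀ ρ : T, ContinuousOn (fun t : ℝ => map t ρ) (Ici 0)
  trace_preserving : ∀ t : ℝ, 0 ≤ t → ∀ ρ : T, Mod.trace (map t ρ) = Mod.trace ρ
  completely_positive : ∀ t : ℝ, 0 ≤ t → Mod.IsCPMap (map t)

variable {Mod : TraceClassModel H T}

/-- `σ = lim_{t→0+} (T^t ρ - ρ)/t` in trace norm. -/
def QDS.HasGenDerivAt (S : QDS Mod) (ρ σ : T) : Prop :=
  Tendsto (fun t : ℝ => (t : ℂ)⁻¹ • (S.map t ρ - ρ)) (𝓝[>] 0) (𝓝 σ)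

/-- The generator of a QDS: the function `L` defined on its maximal domain `Dom`,
consisting of all `ρ` for which `(T^t ρ - ρ)/t` converges in trace norm as `t → 0+`. -/
structure QDS.Generator {H T : Type*} [NormedAddCommGroup H] [InnerProductSpace ℂ H]
    [NormedAddCommGroup T] [NormedSpace ℂ T] {Mod : TraceClassModel H T} (S : QDS Mod) where
  Dom : Set T
  L : T → T
  mem_dom_iff : ∀ ρ : T, ρ ∈ Dom ↔ ∃ σ, S.HasGenDerivAt ρ σ
  hasGenDerivAt : ∀ ρ ∈ Dom, S.HasGenDerivAt ρ (L ρ)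

/-- `D` is a core for the operator `L` with domain `Dom`: `D ⊆ Dom` and `D` is dense in
`Dom` with respect to the graph norm `‖ρ‖ + ‖L ρ‖`. -/
def IsCoreFor {E : Type*} [NormedAddCommGroup E] (L : E → E) (Dom D : Set E) : Prop :=
  D ⊆ Dom ∧ ∀ ρ ∈ Dom, ∀ ε : ℝ, 0 < ε → ∃ σ ∈ D, ‖ρ - σ‖ + ‖L ρ - L σ‖ < ε

/-- `e` is an orthonormal basis of `H`. -/
def IsONBasis {ι : Type*} (e : ι → H) : Prop :=
  Orthonormal ℂ e ∧ Dense ((Submodule.span ℂ (Set.range e) : Submodule ℂ H) : Set H)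

/-- `D_e²`: the linear span of the matrix units `|e_k⟩⟨e_ℓ|` of the basis `e`. -/
def TraceClassModel.De2 (Mod : TraceClassModel H T) {ι : Type*} (e : ι → H) : Set T :=
  (Submodule.span ℂ (Set.range fun p : ι × ι => Mod.rankOne (e p.1) (e p.2)) : Submodule ℂ T)

/-- The QDS is matrix normal with respect to the orthonormal basis `e`:
`D_e²` is a core for the generator. -/
def QDS.Generator.MatrixNormal {S : QDS Mod} (G : S.Generator) {ι : Type*} (e : ι → H) : Prop :=
  IsONBasis e ∧ IsCoreFor G.L G.Dom (Mod.De2 e)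

/-- `M` (a densely defined unbounded operator on `H`) generates a strongly continuous
contraction semigroup `C t = e^{-tM}` on `H`, whose generator `-M` has domain exactly
`M.domain`. -/
def GeneratesContractionSemigroupPMap (M : H →ₗ.[ℂ] H) : Prop :=
  ∃ C : ℝ → H →L[ℂ] H,
    C 0 = ContinuousLinearMap.id ℂ H ∧
    (∀ s t : ℝ, 0 ≤ s → 0 ≤ t → C (s + t) = (C s).comp (C t)) ∧
    (∀ t : ℝ, 0 ≤ t → ‖C t‖ ≤ 1) ∧
    (∀ ψ : H, ContinuousOn (fun t : ℝ => C t ψ) (Ici 0)) ∧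
    (∀ ψ : H, ψ ∈ M.domain ↔
      ∃ η, Tendsto (fun t : ℝ => (t : ℂ)⁻¹ • (C t ψ - ψ)) (𝓝[>] 0) (𝓝 η)) ∧
    (∀ φ : M.domain,
      Tendsto (fun t : ℝ => (t : ℂ)⁻¹ • (C t (φ : H) - (φ : H))) (𝓝[>] 0) (𝓝 (-(M φ))))

/-- `Mf : H → H`, restricted to `D`, generates a strongly continuous contraction semigroup
`C t = e^{-tMf}` on `H`, whose generator `-Mf` has domain exactly `D`. -/
def GeneratesContractionSemigroupOn (Mf : H → H) (D : Set H) : Prop :=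
  ∃ C : ℝ → H →L[ℂ] H,
    C 0 = ContinuousLinearMap.id ℂ H ∧
    (∀ s t : ℝ, 0 ≤ s → 0 ≤ t → C (s + t) = (C s).comp (C t)) ∧
    (∀ t : ℝ, 0 ≤ t → ‖C t‖ ≤ 1) ∧
    (∀ ψ : H, ContinuousOn (fun t : ℝ => C t ψ) (Ici 0)) ∧
    (∀ ψ : H, ψ ∈ D ↔
      ∃ η, Tendsto (fun t : ℝ => (t : ℂ)⁻¹ • (C t ψ - ψ)) (𝓝[>] 0) (𝓝 η)) ∧
    (∀ ψ ∈ D, Tendsto (fun t : ℝ => (t : ℂ)⁻¹ • (C t ψ - ψ)) (𝓝[>] 0) (𝓝 (-Mf ψ)))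


/-!
Since `H × H` is separable, the graph of `M` has a countable dense subset; Gram–Schmidt applied
to its first components yields an orthonormal family `e` whose span `D_e` lies in `D(M)` and is
dense in `D(M)` for the graph norm, hence dense in `H`. The identity
`∑ₖ ‖Lₖφ‖² = 2 Re ⟪φ, Mφ⟫ ≤ 2 ‖φ‖ ‖Mφ‖` makes `(φ, ψ) ↦ L(|φ⟩⟨ψ|)` a sesquilinear map bounded
for the graph norm of `M`, so approximating `φ` and `ψ` from `D_e` approximates every element of
the core `D_0` by elements of `D_e²` in the graph norm of `L`.
-/

theorem tendsto_of_biadditive_of_norm_le {α E F E' F' G FE FF : Type*} [AddGroup E]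
    [AddGroup F] [SeminormedAddCommGroup E'] [SeminormedAddCommGroup F']
    [SeminormedAddCommGroup G] [FunLike FE E E'] [AddMonoidHomClass FE E E']
    [FunLike FF F F'] [AddMonoidHomClass FF F F'] (B : E → F → G) (iE : FE) (iF : FF) (C : ℝ)
    (hB : ∀ a b c d, B a b - B c d = B (a - c) b + B c (b - d))
    (hbound : ∀ a b, ‖B a b‖ ≤ C * ‖iE a‖ * ‖iF b‖) {l : Filter α} {x : α → E} {y : α → F}
    {a : E} {b : F} (hx : Tendsto (fun j => iE (x j)) l (𝓝 (iE a)))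
    (hy : Tendsto (fun j => iF (y j)) l (𝓝 (iF b))) :
    Tendsto (fun j => B (x j) (y j)) l (𝓝 (B a b)) := by
  rw [tendsto_iff_norm_sub_tendsto_zero] at hx ⊢
  have hy' := tendsto_iff_norm_sub_tendsto_zero.mp hy
  have hlim : Tendsto (fun j => C * ‖iE (x j) - iE a‖ * ‖iF (y j)‖ + C * ‖iE a‖ * ‖iF (y j) - iF b‖)
      l (𝓝 0) := by
    simpa using ((hx.const_mul C).mul hy.norm).add (hy'.const_mul (C * ‖iE a‖))
  refine squeeze_zero (fun _ => norm_nonneg _) (fun j => ?_) hlim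
  rw [hB, ← map_sub, ← map_sub]
  exact (norm_add_le _ _).trans (add_le_add (hbound _ _) (hbound _ _))

theorem IsCoreFor.of_tendsto {E : Type*} [NormedAddCommGroup E] {L : E → E} {Dom D D' : Set E}
    (hD : IsCoreFor L Dom D) (hD' : D' ⊆ Dom)
    (happrox : ∀ σ ∈ D, ∃ τ : ℕ → E, (∀ n, τ n ∈ D') ∧ Tendsto τ atTop (𝓝 σ) ∧
      Tendsto (fun n => L (τ n)) atTop (𝓝 (L σ))) :
    IsCoreFor L Dom D' := by
  refine ⟨hD', fun ρ hρ ε hε => ?_⟩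
  obtain ⟨σ, hσ, hρσ⟩ := hD.2 ρ hρ (ε / 2) (half_pos hε)
  obtain ⟨τ, hτD', hτ, hLτ⟩ := happrox σ hσ
  have hclose : Tendsto (fun n => ‖σ - τ n‖ + ‖L σ - L (τ n)‖) atTop (𝓝 0) := by
    simpa using (((tendsto_const_nhds (x := σ)).sub hτ).norm.add
      ((tendsto_const_nhds (x := L σ)).sub hLτ).norm)
  obtain ⟨n, hn⟩ := (hclose.eventually (gt_mem_nhds (half_pos hε))).exists
  refine ⟨τ n, hτD' n, ?_⟩
  calc ‖ρ - τ n‖ + ‖L ρ - L (τ n)‖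
      ≤ (‖ρ - σ‖ + ‖L ρ - L σ‖) + (‖σ - τ n‖ + ‖L σ - L (τ n)‖) := by
        have h1 := norm_sub_le_norm_sub_add_norm_sub ρ σ (τ n)
        have h2 := norm_sub_le_norm_sub_add_norm_sub (L ρ) (L σ) (L (τ n))
        linarith
    _ < ε / 2 + ε / 2 := add_lt_add hρσ hn
    _ = ε := add_halves ε

open TopologicalSpace in
theorem exists_seq_range_subset_closure {α X : Type*} [Nonempty α] [TopologicalSpace X]
    [SeparableSpace X] [PseudoMetrizableSpace X] (g : α → X) :
    ∃ v : ℕ → α, range g ⊆ closure (range (g ∘ v)) := by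
  obtain ⟨t, hts, htc, hst⟩ := (IsSeparable.of_separableSpace (range g)).exists_countable_dense_subset
  obtain ⟨w, rfl⟩ := htc.exists_eq_range (closure_nonempty_iff.mp ((range_nonempty g).mono hst))
  choose v hv using fun n => hts (mem_range_self n)
  refine ⟨v, ?_⟩
  rwa [range_comp, ← range_comp, show g ∘ v = w from funext hv]

theorem exists_orthonormal_span_eq {𝕜 E : Type*} [RCLike 𝕜] [NormedAddCommGroup E]
    [InnerProductSpace 𝕜 E] (f : ℕ → E) :
    ∃ (ι : Type) (_ : Countable ι) (e : ι → E),
      Orthonormal 𝕜 e ∧ Submodule.span 𝕜 (range e) = Submodule.span 𝕜 (range f) := by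
  open InnerProductSpace in
  refine ⟨{n | gramSchmidtNormed 𝕜 f n ≠ 0}, inferInstance, fun i => gramSchmidtNormed 𝕜 f i,
    gramSchmidtNormed_orthonormal' f, ?_⟩
  rw [← span_gramSchmidt 𝕜 f, ← span_gramSchmidtNormed_range]
  refine Submodule.span_eq_span (range_subset_iff.mpr fun i => Submodule.subset_span ⟨i, rfl⟩)
    (range_subset_iff.mpr fun n => ?_)
  by_cases h : gramSchmidtNormed 𝕜 f n = 0
  · simp [h]
  · exact Submodule.subset_span ⟨⟨n, h⟩, rfl⟩

namespace TraceClassModel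

variable {H T : Type*} [NormedAddCommGroup H] [InnerProductSpace ℂ H]
  [NormedAddCommGroup T] [NormedSpace ℂ T] (Mod : TraceClassModel H T)

theorem rankOne_add_left (x x' y : H) :
    Mod.rankOne (x + x') y = Mod.rankOne x y + Mod.rankOne x' y := by
  apply Mod.toCLM_injective
  ext z
  simp [toCLM_rankOne]

theorem rankOne_smul_left (c : ℂ) (x y : H) : Mod.rankOne (c • x) y = c • Mod.rankOne x y := by
  apply Mod.toCLM_injective
  ext z
  simp [toCLM_rankOne, smul_comm c]

theorem rankOne_add_right (x y y' : H) :
    Mod.rankOne x (y + y') = Mod.rankOne x y + Mod.rankOne x y' := by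
  apply Mod.toCLM_injective
  ext z
  simp [toCLM_rankOne, add_smul]

theorem rankOne_smul_right (c : ℂ) (x y : H) :
    Mod.rankOne x (c • y) = conj c • Mod.rankOne x y := by
  apply Mod.toCLM_injective
  ext z
  simp [toCLM_rankOne, mul_smul, smul_comm (conj c)]

def rankOneₛₗ : H →ₗ[ℂ] H →ₗ⋆[ℂ] T :=
  LinearMap.mk₂'ₛₗ (RingHom.id ℂ) (starRingEnd ℂ) Mod.rankOne Mod.rankOne_add_left
    Mod.rankOne_smul_left Mod.rankOne_add_right Mod.rankOne_smul_right

theorem rankOne_sub_left (x x' y : H) :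
    Mod.rankOne (x - x') y = Mod.rankOne x y - Mod.rankOne x' y :=
  Mod.rankOneₛₗ.map_sub₂ x x' y

theorem rankOne_sub_right (x y y' : H) :
    Mod.rankOne x (y - y') = Mod.rankOne x y - Mod.rankOne x y' :=
  (Mod.rankOneₛₗ x).map_sub y y'

theorem continuous_uncurry_rankOne : Continuous (Function.uncurry Mod.rankOne) :=
  continuous_iff_continuousAt.mpr fun p =>
    tendsto_of_biadditive_of_norm_le Mod.rankOne (AddMonoidHom.id H) (AddMonoidHom.id H) 1
      (fun a b c d => by rw [rankOne_sub_left, rankOne_sub_right]; abel)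
      (fun a b => by simp [norm_rankOne]) continuous_fst.continuousAt continuous_snd.continuousAt

theorem rankOne_mem_De2 {ι : Type*} {e : ι → H} {x y : H}
    (hx : x ∈ Submodule.span ℂ (range e)) (hy : y ∈ Submodule.span ℂ (range e)) :
    Mod.rankOne x y ∈ Mod.De2 e := by
  set D : Submodule ℂ T :=
    Submodule.span ℂ (range fun p : ι × ι => Mod.rankOne (e p.1) (e p.2))
  have hright (i : ι) : Submodule.span ℂ (range e) ≤ D.comap (Mod.rankOneₛₗ (e i)) :=
    Submodule.span_le.mpr <| range_subset_iff.mpr fun j => Submodule.subset_span ⟨(i, j), rfl⟩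
  have hleft : Submodule.span ℂ (range e) ≤ D.comap (Mod.rankOneₛₗ.flip y) :=
    Submodule.span_le.mpr <| range_subset_iff.mpr fun i => hright i hy
  exact hleft hx

theorem norm_tsum_rankOne_le {ι : Type*} {a b : ι → H} (ha : Summable fun k => ‖a k‖ ^ 2)
    (hb : Summable fun k => ‖b k‖ ^ 2) :
    ‖∑' k, Mod.rankOne (a k) (b k)‖ ≤ √(∑' k, ‖a k‖ ^ 2) * √(∑' k, ‖b k‖ ^ 2) := by
  have ha' : Summable fun k => ‖a k‖ ^ (2 : ℝ) := by simpa using ha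
  have hb' : Summable fun k => ‖b k‖ ^ (2 : ℝ) := by simpa using hb
  obtain ⟨hsum, hle⟩ := Real.summable_and_inner_le_Lp_mul_Lq_tsum_of_nonneg .two_two
    (fun k => norm_nonneg (a k)) (fun k => norm_nonneg (b k)) ha' hb'
  simp only [Real.rpow_two, ← Real.sqrt_eq_rpow] at hle
  calc ‖∑' k, Mod.rankOne (a k) (b k)‖ ≤ ∑' k, ‖Mod.rankOne (a k) (b k)‖ :=
        norm_tsum_le_tsum_norm (by simpa [norm_rankOne] using hsum)
    _ = ∑' k, ‖a k‖ * ‖b k‖ := by simp [norm_rankOne]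
    _ ≤ _ := hle

end TraceClassModel

section Generator

variable {H T : Type*} [NormedAddCommGroup H] [InnerProductSpace ℂ H] [NormedAddCommGroup T]
  [NormedSpace ℂ T] {Mod : TraceClassModel H T} {S : QDS Mod}

theorem QDS.HasGenDerivAt.add {ρ₁ ρ₂ σ₁ σ₂ : T} (h₁ : S.HasGenDerivAt ρ₁ σ₁)
    (h₂ : S.HasGenDerivAt ρ₂ σ₂) : S.HasGenDerivAt (ρ₁ + ρ₂) (σ₁ + σ₂) := by
  unfold QDS.HasGenDerivAt at *
  convert h₁.add h₂ using 2 with t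
  rw [_root_.map_add, add_sub_add_comm, smul_add]

theorem QDS.HasGenDerivAt.const_smul {ρ σ : T} (h : S.HasGenDerivAt ρ σ) (c : ℂ) :
    S.HasGenDerivAt (c • ρ) (c • σ) := by
  unfold QDS.HasGenDerivAt at *
  convert h.const_smul c using 2 with t
  rw [map_smul, ← smul_sub, smul_comm]

def QDS.Generator.domain (G : S.Generator) : Submodule ℂ T where
  carrier := G.Dom
  zero_mem' := (G.mem_dom_iff 0).mpr ⟨0, by simp [QDS.HasGenDerivAt]⟩
  add_mem' h₁ h₂ := by
    obtain ⟨σ₁, hσ₁⟩ := (G.mem_dom_iff _).mp h₁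
    obtain ⟨σ₂, hσ₂⟩ := (G.mem_dom_iff _).mp h₂
    exact (G.mem_dom_iff _).mpr ⟨σ₁ + σ₂, hσ₁.add hσ₂⟩
  smul_mem' c _ h := by
    obtain ⟨σ, hσ⟩ := (G.mem_dom_iff _).mp h
    exact (G.mem_dom_iff _).mpr ⟨c • σ, hσ.const_smul c⟩

@[simp]
theorem QDS.Generator.mem_domain (G : S.Generator) {ρ : T} : ρ ∈ G.domain ↔ ρ ∈ G.Dom := Iff.rfl

end Generator

namespace LinearPMap

variable {R E F : Type*} [Ring R] [AddCommGroup E] [Module R E] [AddCommGroup F] [Module R F]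

def graphMap (f : E →ₗ.[R] F) : f.domain →ₗ[R] E × F :=
  f.domain.subtype.prod f.toFun

end LinearPMap

section GraphApproximation

variable {R E F : Type*} [Ring R] [SeminormedAddCommGroup E] [Module R E]
  [SeminormedAddCommGroup F] [Module R F] {f : E →ₗ.[R] F} {S : Set f.domain} {φ : f.domain}

theorem exists_approx_of_graphMap_mem_closure
    (h : f.graphMap φ ∈ closure (f.graphMap '' S)) {ε : ℝ} (hε : 0 < ε) :
    ∃ x ∈ S, ‖(φ : E) - x‖ ≤ ε ∧ ‖f φ - f x‖ ≤ ε := by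
  obtain ⟨_, ⟨x, hxS, rfl⟩, hdist⟩ := Metric.mem_closure_iff.mp h ε hε
  rw [Prod.dist_eq, max_lt_iff, dist_eq_norm, dist_eq_norm] at hdist
  exact ⟨x, hxS, hdist.1.le, hdist.2.le⟩

theorem exists_seq_tendsto_graphMap (h : f.graphMap φ ∈ closure (f.graphMap '' S)) :
    ∃ x : ℕ → f.domain, (∀ n, x n ∈ S) ∧
      Tendsto (fun n => f.graphMap (x n)) atTop (𝓝 (f.graphMap φ)) := by
  obtain ⟨b, hbS, hb⟩ := mem_closure_iff_seq_limit.mp h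
  choose x hxS hx using hbS
  exact ⟨x, hxS, by simpa only [hx] using hb⟩

end GraphApproximation

variable {H F : Type*} [NormedAddCommGroup H] [InnerProductSpace ℂ H] [NormedAddCommGroup F]
  [NormedSpace ℂ F] in
theorem exists_orthonormal_graph_dense [TopologicalSpace.SeparableSpace H]
    [TopologicalSpace.SeparableSpace F] (M : H →ₗ.[ℂ] F) (hdense : Dense (M.domain : Set H)) :
    ∃ (ι : Type) (_ : Countable ι) (e : ι → H), IsONBasis e ∧
      Submodule.span ℂ (range e) ≤ M.domain ∧
      range M.graphMap ⊆ closure (M.graphMap '' {x | (x : H) ∈ Submodule.span ℂ (range e)}) := by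
  obtain ⟨v, hv⟩ := exists_seq_range_subset_closure M.graphMap
  obtain ⟨ι, hι, e, he, hspan⟩ := exists_orthonormal_span_eq (𝕜 := ℂ) fun n => (v n : H)
  have hle : Submodule.span ℂ (range e) ≤ M.domain :=
    hspan ▸ Submodule.span_le.mpr (range_subset_iff.mpr fun n => (v n).2)
  have hgraph : range M.graphMap ⊆
      closure (M.graphMap '' {x | (x : H) ∈ Submodule.span ℂ (range e)}) :=
    hv.trans <| closure_mono <| range_subset_iff.mpr fun n =>
      ⟨v n, hspan ▸ Submodule.subset_span ⟨n, rfl⟩, rfl⟩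
  have hdom : (M.domain : Set H) ⊆ closure (Submodule.span ℂ (range e)) := fun φ hφ =>
    map_mem_closure continuous_fst (hgraph ⟨⟨φ, hφ⟩, rfl⟩) fun _ ⟨x, hx, hxφ⟩ => hxφ ▸ hx
  exact ⟨ι, hι, e, ⟨he, dense_closure.mp (hdense.mono hdom)⟩, hle, hgraph⟩

section StandardForm

variable {H T : Type*} [NormedAddCommGroup H] [InnerProductSpace ℂ H] [NormedAddCommGroup T]
  [NormedSpace ℂ T] (Mod : TraceClassModel H T) (M : H →ₗ.[ℂ] H) (Lk : ℕ → M.domain →ₗ[ℂ] H)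

/-- `L(|φ⟩⟨ψ|)` in generalized standard form. -/
def TraceClassModel.standardForm (φ ψ : M.domain) : T :=
  (∑' k, Mod.rankOne (Lk k φ) (Lk k ψ)) - Mod.rankOne (M φ) ψ - Mod.rankOne φ (M ψ)

variable {Mod M Lk}

theorem TraceClassModel.standardForm_sub_standardForm
    (hSumm : ∀ φ ψ : M.domain, Summable fun k => Mod.rankOne (Lk k φ) (Lk k ψ))
    (a b c d : M.domain) :
    Mod.standardForm M Lk a b - Mod.standardForm M Lk c d =
      Mod.standardForm M Lk (a - c) b + Mod.standardForm M Lk c (b - d) := by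
  have hjump : (∑' k, Mod.rankOne (Lk k a) (Lk k b)) - ∑' k, Mod.rankOne (Lk k c) (Lk k d) =
      (∑' k, Mod.rankOne (Lk k (a - c)) (Lk k b)) + ∑' k, Mod.rankOne (Lk k c) (Lk k (b - d)) := by
    rw [← (hSumm a b).tsum_sub (hSumm c d), ← (hSumm _ _).tsum_add (hSumm _ _)]
    refine tsum_congr fun k => ?_
    rw [map_sub, map_sub, Mod.rankOne_sub_left, Mod.rankOne_sub_right]
    abel
  simp only [TraceClassModel.standardForm, M.map_sub, Submodule.coe_sub, Mod.rankOne_sub_left,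
    Mod.rankOne_sub_right]
  linear_combination (norm := abel) hjump

theorem sqrt_tsum_sq_norm_le {φ : M.domain}
    (hφ : ∑' k, ‖Lk k φ‖ ^ 2 = 2 * (⟪(φ : H), M φ⟫_ℂ).re) :
    √(∑' k, ‖Lk k φ‖ ^ 2) ≤ 2 * ‖M.graphMap φ‖ := by
  have hre : (⟪(φ : H), M φ⟫_ℂ).re ≤ ‖M.graphMap φ‖ * ‖M.graphMap φ‖ :=
    (Complex.re_le_norm _).trans <| (norm_inner_le_norm _ _).trans <|
      mul_le_mul (norm_fst_le (M.graphMap φ)) (norm_snd_le (M.graphMap φ)) (norm_nonneg _)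
        (norm_nonneg _)
  rw [Real.sqrt_le_iff, hφ]
  exact ⟨by positivity, by nlinarith [norm_nonneg (M.graphMap φ)]⟩

theorem TraceClassModel.norm_standardForm_le
    (hnormsq : ∀ φ : M.domain, (Summable fun k => ‖Lk k φ‖ ^ 2) ∧
      ∑' k, ‖Lk k φ‖ ^ 2 = 2 * (⟪(φ : H), M φ⟫_ℂ).re)
    (a b : M.domain) :
    ‖Mod.standardForm M Lk a b‖ ≤ 6 * ‖M.graphMap a‖ * ‖M.graphMap b‖ := by
  have hjump : ‖∑' k, Mod.rankOne (Lk k a) (Lk k b)‖ ≤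
      (2 * ‖M.graphMap a‖) * (2 * ‖M.graphMap b‖) :=
    (Mod.norm_tsum_rankOne_le (hnormsq a).1 (hnormsq b).1).trans <|
      mul_le_mul (sqrt_tsum_sq_norm_le (hnormsq a).2)
        (sqrt_tsum_sq_norm_le (hnormsq b).2) (Real.sqrt_nonneg _) (by positivity)
  have hleft : ‖Mod.rankOne (M a) b‖ ≤ ‖M.graphMap a‖ * ‖M.graphMap b‖ := by
    rw [Mod.norm_rankOne]
    exact mul_le_mul (norm_snd_le (M.graphMap a)) (norm_fst_le (M.graphMap b)) (norm_nonneg _)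
      (norm_nonneg _)
  have hright : ‖Mod.rankOne a (M b)‖ ≤ ‖M.graphMap a‖ * ‖M.graphMap b‖ := by
    rw [Mod.norm_rankOne]
    exact mul_le_mul (norm_fst_le (M.graphMap a)) (norm_snd_le (M.graphMap b)) (norm_nonneg _)
      (norm_nonneg _)
  calc ‖Mod.standardForm M Lk a b‖
      ≤ ‖∑' k, Mod.rankOne (Lk k a) (Lk k b)‖ + ‖Mod.rankOne (M a) b‖ + ‖Mod.rankOne a (M b)‖ :=
        (norm_sub_le _ _).trans (add_le_add_left (norm_sub_le _ _) _)
    _ ≤ 6 * ‖M.graphMap a‖ * ‖M.graphMap b‖ := by linarith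

theorem TraceClassModel.tendsto_standardForm
    (hSumm : ∀ φ ψ : M.domain, Summable fun k => Mod.rankOne (Lk k φ) (Lk k ψ))
    (hnormsq : ∀ φ : M.domain, (Summable fun k => ‖Lk k φ‖ ^ 2) ∧
      ∑' k, ‖Lk k φ‖ ^ 2 = 2 * (⟪(φ : H), M φ⟫_ℂ).re)
    {x y : ℕ → M.domain} {φ ψ : M.domain}
    (hx : Tendsto (fun j => M.graphMap (x j)) atTop (𝓝 (M.graphMap φ)))
    (hy : Tendsto (fun j => M.graphMap (y j)) atTop (𝓝 (M.graphMap ψ))) :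
    Tendsto (fun j => Mod.standardForm M Lk (x j) (y j)) atTop (𝓝 (Mod.standardForm M Lk φ ψ)) :=
  tendsto_of_biadditive_of_norm_le _ M.graphMap M.graphMap 6
    (Mod.standardForm_sub_standardForm hSumm) (Mod.norm_standardForm_le hnormsq) hx hy

end StandardForm

theorem exists_basis_core_of_generalized_standard_form_general [TopologicalSpace.SeparableSpace H]
    (S : QDS Mod) (G : S.Generator)
    (M : H →ₗ.[ℂ] H) (hdense : Dense (M.domain : Set H))
    (Lk : ℕ → M.domain →ₗ[ℂ] H)
    (hSumm : ∀ φ ψ : M.domain, Summable fun k => Mod.rankOne (Lk k φ) (Lk k ψ))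
    (hform : ∀ (N : ℕ) (φ ψ : Fin N → M.domain),
      (∑ n, Mod.rankOne (φ n) (ψ n)) ∈ G.Dom ∧
      G.L (∑ n, Mod.rankOne (φ n) (ψ n)) =
        ∑ n, ((∑' k, Mod.rankOne (Lk k (φ n)) (Lk k (ψ n)))
          - Mod.rankOne (M (φ n)) (ψ n) - Mod.rankOne (φ n) (M (ψ n))))
    (hcore : IsCoreFor G.L G.Dom
      {ρ : T | ∃ (N : ℕ) (φ ψ : Fin N → M.domain), ρ = ∑ n, Mod.rankOne (φ n) (ψ n)})
    (hnormsq : ∀ φ : M.domain, (Summable fun k => ‖Lk k φ‖ ^ 2) ∧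
      ∑' k, ‖Lk k φ‖ ^ 2 = 2 * (⟪(φ : H), M φ⟫_ℂ).re) :
    ∃ (ι : Type) (_ : Countable ι) (e : ι → H),
      IsONBasis e ∧
      -- `D_e ⊆ D(M)` and `D_e` is a core for `M` (dense in `D(M)` in graph norm)
      Submodule.span ℂ (Set.range e) ≤ M.domain ∧
      (∀ (φ : M.domain) (ε : ℝ), 0 < ε → ∃ x : M.domain,
        (x : H) ∈ Submodule.span ℂ (Set.range e) ∧
        ‖(φ : H) - (x : H)‖ ≤ ε ∧ ‖M φ - M x‖ ≤ ε) ∧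
      -- `D_e²` is a core for `L`
      IsCoreFor G.L G.Dom (Mod.De2 e) := by
  obtain ⟨ι, hι, e, he, hle, hgraph⟩ := exists_orthonormal_graph_dense M hdense
  have hL (N : ℕ) (φ ψ : Fin N → M.domain) :
      G.L (∑ n, Mod.rankOne (φ n) (ψ n)) = ∑ n, Mod.standardForm M Lk (φ n) (ψ n) :=
    (hform N φ ψ).2
  have hDom : Mod.De2 e ⊆ G.Dom := Submodule.span_le (p := G.domain).mpr <|
    range_subset_iff.mpr fun p => by
      simpa using (hform 1 (fun _ => ⟨e p.1, hle (Submodule.subset_span ⟨p.1, rfl⟩)⟩)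
        (fun _ => ⟨e p.2, hle (Submodule.subset_span ⟨p.2, rfl⟩)⟩)).1
  refine ⟨ι, hι, e, he, hle, fun φ ε hε => exists_approx_of_graphMap_mem_closure
    (hgraph ⟨φ, rfl⟩) hε, hcore.of_tendsto hDom ?_⟩
  rintro _ ⟨N, φ, ψ, rfl⟩
  choose x hxe hx using fun n => exists_seq_tendsto_graphMap (hgraph ⟨φ n, rfl⟩)
  choose y hye hy using fun n => exists_seq_tendsto_graphMap (hgraph ⟨ψ n, rfl⟩)
  refine ⟨fun j => ∑ n, Mod.rankOne (x n j) (y n j),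
    fun j => Submodule.sum_mem _ fun n _ => Mod.rankOne_mem_De2 (hxe n j) (hye n j),
    tendsto_finsetSum _ fun n _ => (Mod.continuous_uncurry_rankOne.tendsto _).comp
      ((hx n).fst_nhds.prodMk_nhds (hy n).fst_nhds), ?_⟩
  simp only [hL]
  exact tendsto_finsetSum _ fun n _ => Mod.tendsto_standardForm hSumm hnormsq (hx n) (hy n)

/-- Proposition 4: if the generator `L` of a trace-preserving QDS is in
generalized standard form with operators `M` and `(L_k)`, then there exists an orthonormal
basis `{e_k}` of `H` such that `D_e` is a core for `M` and `D_e²` is a core for `L`. -/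
theorem exists_basis_core_of_generalized_standard_form [TopologicalSpace.SeparableSpace H]
    (S : QDS Mod) (G : S.Generator)
    (M : H →ₗ.[ℂ] H) (hdense : Dense (M.domain : Set H)) (hclosed : M.IsClosed)
    (hgen : GeneratesContractionSemigroupPMap M)
    (Lk : ℕ → M.domain →ₗ[ℂ] H)
    (hrb : ∀ k, ∃ a b : ℝ, ∀ φ : M.domain, ‖Lk k φ‖ ≤ a * ‖(φ : H)‖ + b * ‖M φ‖)
    (hSumm : ∀ φ ψ : M.domain, Summable fun k => Mod.rankOne (Lk k φ) (Lk k ψ))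
    (hform : ∀ (N : ℕ) (φ ψ : Fin N → M.domain),
      (∑ n, Mod.rankOne (φ n) (ψ n)) ∈ G.Dom ∧
      G.L (∑ n, Mod.rankOne (φ n) (ψ n)) =
        ∑ n, ((∑' k, Mod.rankOne (Lk k (φ n)) (Lk k (ψ n)))
          - Mod.rankOne (M (φ n)) (ψ n) - Mod.rankOne (φ n) (M (ψ n))))
    (hcore : IsCoreFor G.L G.Dom
      {ρ : T | ∃ (N : ℕ) (φ ψ : Fin N → M.domain), ρ = ∑ n, Mod.rankOne (φ n) (ψ n)})
    (hnormsq : ∀ φ : M.domain, (Summable fun k => ‖Lk k φ‖ ^ 2) ∧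
      ∑' k, ‖Lk k φ‖ ^ 2 = 2 * (⟪(φ : H), M φ⟫_ℂ).re) :
    ∃ (ι : Type) (_ : Countable ι) (e : ι → H),
      IsONBasis e ∧
      -- `D_e ⊆ D(M)` and `D_e` is a core for `M` (dense in `D(M)` in graph norm)
      Submodule.span ℂ (Set.range e) ≤ M.domain ∧
      (∀ (φ : M.domain) (ε : ℝ), 0 < ε → ∃ x : M.domain,
        (x : H) ∈ Submodule.span ℂ (Set.range e) ∧
        ‖(φ : H) - (x : H)‖ ≤ ε ∧ ‖M φ - M x‖ ≤ ε) ∧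
      -- `D_e²` is a core for `L`
      IsCoreFor G.L G.Dom (Mod.De2 e) :=
  exists_basis_core_of_generalized_standard_form_general S G M hdense Lk hSumm hform hcore hnormsq
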